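/- Assume H = inf_x min_{i<j} |p_{i,j}(x) - 1/2| > 0 and each P_x is strictly stochastically transitive with unique Kemeny median σ*_{P_x}. For a ranking rule s, let Z(s) = Σ_{i<j} [1{(Σ(i)-Σ(j))(s(X)(i)-s(X)(j)) < 0} - 1{(Σ(i)-Σ(j))(σ*_{P_X}(i)-σ*_{P_X}(j)) < 0}]. Then Var(Z(s)) ≤ (n(n-1)/(2H)) · (R(s) - R*). -/

import Mathlib

open Finset

/-- The set of ordered pairs (i,j) with i < j. -/
def pairs (n : ℕ) : Finset (Fin n × Fin n) :=
  Finset.univ.filter fun p => p.1 < p.2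

/-- Kendall tau distance between two permutations. -/
noncomputable def dtau {n : ℕ} (σ σ' : Equiv.Perm (Fin n)) : ℝ :=
  ∑ p ∈ pairs n,
    if (((σ p.1 : ℕ) : ℤ) - ((σ p.2 : ℕ) : ℤ)) * (((σ' p.1 : ℕ) : ℤ) - ((σ' p.2 : ℕ) : ℤ)) < 0
    then 1 else 0

/-- Expected Kendall tau distance L_P(σ) = E_{Σ∼P}[d_τ(Σ,σ)]. -/
noncomputable def L {n : ℕ} (P : Equiv.Perm (Fin n) → ℝ) (σ : Equiv.Perm (Fin n)) : ℝ :=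
  ∑ τ : Equiv.Perm (Fin n), P τ * dtau τ σ

/-- Pairwise probability p_{i,j} = P{Σ(i) < Σ(j)}. -/
noncomputable def pp {n : ℕ} (P : Equiv.Perm (Fin n) → ℝ) (i j : Fin n) : ℝ :=
  ∑ τ : Equiv.Perm (Fin n), P τ * (if τ i < τ j then 1 else 0)

/-- P is a probability distribution on S_n. -/
def IsProb {n : ℕ} (P : Equiv.Perm (Fin n) → ℝ) : Prop :=
  (∀ τ, 0 ≤ P τ) ∧ ∑ τ : Equiv.Perm (Fin n), P τ = 1

/-- σ is a Kemeny median of P. -/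
def IsMedian {n : ℕ} (P : Equiv.Perm (Fin n) → ℝ) (σ : Equiv.Perm (Fin n)) : Prop :=
  ∀ τ, L P σ ≤ L P τ

/-- L*_P = min_σ L_P(σ). -/
noncomputable def Lstar {n : ℕ} (P : Equiv.Perm (Fin n) → ℝ) : ℝ :=
  ⨅ σ : Equiv.Perm (Fin n), L P σ

/-- Stochastic transitivity. -/
def StochTrans {n : ℕ} (P : Equiv.Perm (Fin n) → ℝ) : Prop :=
  ∀ i j k : Fin n, 1/2 ≤ pp P i j → 1/2 ≤ pp P j k → 1/2 ≤ pp P i k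

/-- Strict stochastic transitivity. -/
def StrictStochTrans {n : ℕ} (P : Equiv.Perm (Fin n) → ℝ) : Prop :=
  StochTrans P ∧ ∀ i j : Fin n, i < j → pp P i j ≠ 1/2

open MeasureTheory

instance {n : ℕ} : MeasurableSpace (Equiv.Perm (Fin n)) := ⊤

/-- Risk of a ranking rule s: R(s) = E_{X∼μ}[L_{P_X}(s(X))]. -/
noncomputable def Risk {n : ℕ} {X : Type*} [MeasurableSpace X] (μ : Measure X)
    (P : X → Equiv.Perm (Fin n) → ℝ) (s : X → Equiv.Perm (Fin n)) : ℝ :=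
  ∫ x, L (P x) (s x) ∂μ

/-- Minimum risk over all measurable ranking rules. -/
noncomputable def RiskStar {n : ℕ} {X : Type*} [MeasurableSpace X] (μ : Measure X)
    (P : X → Equiv.Perm (Fin n) → ℝ) : ℝ :=
  sInf {r | ∃ s : X → Equiv.Perm (Fin n), Measurable s ∧ r = Risk μ P s}

/-- Expectation under the joint law of (X, Σ). -/
noncomputable def jointE {n : ℕ} {X : Type*} [MeasurableSpace X] (μ : Measure X)
    (P : X → Equiv.Perm (Fin n) → ℝ) (f : X → Equiv.Perm (Fin n) → ℝ) : ℝ :=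
  ∫ x, ∑ τ : Equiv.Perm (Fin n), P x τ * f x τ ∂μ

/-- The random variable Z(s) of the fast-rate lemma. -/
noncomputable def Zfun {n : ℕ} {X : Type*} (s sstar : X → Equiv.Perm (Fin n))
    (x : X) (τ : Equiv.Perm (Fin n)) : ℝ :=
  ∑ p ∈ pairs n,
    ((if (((τ p.1 : ℕ) : ℤ) - ((τ p.2 : ℕ) : ℤ)) *
          (((s x p.1 : ℕ) : ℤ) - ((s x p.2 : ℕ) : ℤ)) < 0 then (1:ℝ) else 0) -
     (if (((τ p.1 : ℕ) : ℤ) - ((τ p.2 : ℕ) : ℤ)) *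
          (((sstar x p.1 : ℕ) : ℤ) - ((sstar x p.2 : ℕ) : ℤ)) < 0 then (1:ℝ) else 0))


/-!
Conditionally on `X = x`, the summands of `Z` vanish on the pairs where `s x` and `σ* x` agree,
so `|Z| ≤ m`, the number of pairs on which they disagree, and `E[Z² | x] ≤ m² ≤ n(n-1) m`.
Under strict stochastic transitivity the pairwise majority relation is a strict total order, so
some permutation realises it (rank each item by the number of items beating it); comparing with
that permutation shows that every Kemeny median agrees with the majority on every pair. Hence each
pair on which `s x` disagrees with `σ* x` costs `|2 p_{ij} - 1| ≥ 2H` in expected Kendall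
distance, i.e. `L(s x) - L(σ* x) ≥ 2H m`. Integrating in `x` and using `Var Z ≤ E Z²` concludes.
-/

section

variable {n : ℕ}

theorem exists_perm_lt_iff_of_isStrictTotalOrder (r : Fin n → Fin n → Prop)
    [IsStrictTotalOrder (Fin n) r] :
    ∃ σ : Equiv.Perm (Fin n), ∀ i j, σ i < σ j ↔ r i j := by
  classical
  let rank : Fin n → Fin n := fun i =>
    ⟨#{k | r k i}, by
      simpa using Finset.card_lt_card
        ((Finset.filter_ssubset (p := (r · i))).mpr ⟨i, mem_univ i, irrefl (r := r) i⟩)⟩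
  have rank_lt {i j : Fin n} (hij : r i j) : rank i < rank j := by
    change #{k | r k i} < #{k | r k j}
    refine Finset.card_lt_card ((Finset.ssubset_iff_of_subset fun k hk => ?_).mpr ⟨i, ?_, ?_⟩)
    · simp only [Finset.mem_filter, mem_univ, true_and] at hk ⊢
      exact _root_.trans hk hij
    · simpa using hij
    · simpa using irrefl (r := r) i
  have rank_injective : Function.Injective rank := fun i j h => by
    rcases trichotomous_of r i j with hij | hij | hji
    · exact absurd h (rank_lt hij).ne
    · exact hij
    · exact absurd h (rank_lt hji).ne'
  refine ⟨Equiv.ofBijective rank (Finite.injective_iff_bijective.mp rank_injective),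
    fun i j => ⟨fun h => ?_, rank_lt⟩⟩
  rcases trichotomous_of r i j with hij | rfl | hji
  · exact hij
  · exact absurd h (lt_irrefl _)
  · exact absurd (rank_lt hji) (not_lt.mpr h.le)

lemma mem_pairs {p : Fin n × Fin n} : p ∈ pairs n ↔ p.1 < p.2 := by
  simp [pairs]

lemma ne_of_mem_pairs {p : Fin n × Fin n} (hp : p ∈ pairs n) : p.1 ≠ p.2 :=
  (mem_pairs.mp hp).ne

lemma card_pairs_le : ((#(pairs n) : ℕ) : ℝ) ≤ n * (n - 1) := by
  have hsub : pairs n ⊆ (univ : Finset (Fin n)).offDiag := fun p hp => by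
    simpa using ne_of_mem_pairs hp
  have hcard := Finset.card_le_card hsub
  rw [Finset.offDiag_card, card_univ, Fintype.card_fin] at hcard
  calc ((#(pairs n) : ℕ) : ℝ) ≤ ((n * n - n : ℕ) : ℝ) := by exact_mod_cast hcard
    _ = n * (n - 1) := by rw [Nat.cast_sub (Nat.le_mul_self n)]; push_cast; ring

noncomputable def discord (τ σ : Equiv.Perm (Fin n)) (p : Fin n × Fin n) : ℝ :=
  if (((τ p.1 : ℕ) : ℤ) - ((τ p.2 : ℕ) : ℤ)) * (((σ p.1 : ℕ) : ℤ) - ((σ p.2 : ℕ) : ℤ)) < 0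
  then 1 else 0

lemma dtau_eq_sum_discord (τ σ : Equiv.Perm (Fin n)) :
    dtau τ σ = ∑ p ∈ pairs n, discord τ σ p := rfl

lemma Zfun_eq_sum_discord {X : Type*} (s sstar : X → Equiv.Perm (Fin n)) (x : X)
    (τ : Equiv.Perm (Fin n)) :
    Zfun s sstar x τ = ∑ p ∈ pairs n, (discord τ (s x) p - discord τ (sstar x) p) := rfl

lemma discord_eq (τ σ : Equiv.Perm (Fin n)) {p : Fin n × Fin n} (hp : p.1 ≠ p.2) :
    discord τ σ p = if σ p.1 < σ p.2 then (if τ p.2 < τ p.1 then 1 else 0)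
      else (if τ p.1 < τ p.2 then 1 else 0) := by
  have hτ : (τ p.1 : ℕ) ≠ τ p.2 := fun h => hp (τ.injective (Fin.ext h))
  have hσ : (σ p.1 : ℕ) ≠ σ p.2 := fun h => hp (σ.injective (Fin.ext h))
  simp only [discord, Fin.lt_def, mul_neg_iff, sub_pos, sub_neg, Nat.cast_lt]
  split_ifs <;> first | rfl | (exfalso; omega)

lemma discord_congr (τ : Equiv.Perm (Fin n)) {σ σ' : Equiv.Perm (Fin n)} {p : Fin n × Fin n}
    (hp : p.1 ≠ p.2) (h : σ p.1 < σ p.2 ↔ σ' p.1 < σ' p.2) :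
    discord τ σ p = discord τ σ' p := by
  rw [discord_eq τ σ hp, discord_eq τ σ' hp, if_congr h rfl rfl]

lemma abs_discord_sub_discord_le_one (τ σ σ' : Equiv.Perm (Fin n)) (p : Fin n × Fin n) :
    |discord τ σ p - discord τ σ' p| ≤ 1 := by
  unfold discord; split_ifs <;> norm_num

noncomputable def pairCost (P : Equiv.Perm (Fin n) → ℝ) (σ : Equiv.Perm (Fin n))
    (p : Fin n × Fin n) : ℝ :=
  if σ p.1 < σ p.2 then pp P p.2 p.1 else pp P p.1 p.2

lemma L_eq_sum_pairCost (P : Equiv.Perm (Fin n) → ℝ) (σ : Equiv.Perm (Fin n)) :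
    L P σ = ∑ p ∈ pairs n, pairCost P σ p := by
  simp only [L, dtau_eq_sum_discord, Finset.mul_sum]
  rw [Finset.sum_comm]
  refine Finset.sum_congr rfl fun p hp => ?_
  simp only [discord_eq _ σ (ne_of_mem_pairs hp), pairCost]
  split_ifs <;> rfl

lemma pp_self (P : Equiv.Perm (Fin n) → ℝ) (i : Fin n) : pp P i i = 0 := by
  simp [pp]

lemma pp_add_pp_swap {P : Equiv.Perm (Fin n) → ℝ} (hP : IsProb P) {i j : Fin n}
    (hij : i ≠ j) :
    pp P i j + pp P j i = 1 := by
  rw [pp, pp, ← Finset.sum_add_distrib]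
  refine (Finset.sum_congr rfl fun τ _ => ?_).trans hP.2
  rcases (τ.injective.ne hij).lt_or_gt with h | h
  · simp [h, h.not_gt]
  · simp [h, h.not_gt]

def Majority (P : Equiv.Perm (Fin n) → ℝ) (i j : Fin n) : Prop := 1/2 < pp P i j

lemma isStrictTotalOrder_majority {P : Equiv.Perm (Fin n) → ℝ} (hP : IsProb P)
    (hT : StrictStochTrans P) : IsStrictTotalOrder (Fin n) (Majority P) := by
  have ne_half {i j : Fin n} (hij : i ≠ j) : pp P i j ≠ 1/2 := by
    rcases hij.lt_or_gt with h | h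
    · exact hT.2 i j h
    · exact fun h' => hT.2 j i h (by linarith [pp_add_pp_swap hP hij])
  have irrefl' (i : Fin n) : ¬ Majority P i i := by simp [Majority, pp_self]
  refine
    { irrefl := irrefl'
      trichotomous := fun i j hij hji => ?_
      trans := fun i j k hij hjk => ?_ }
  · by_contra hne
    have := pp_add_pp_swap hP hne
    have := ne_half hne
    simp only [Majority, not_lt] at hij hji
    exact this (by linarith)
  · have hik : i ≠ k := by
      rintro rfl
      have hne : i ≠ j := fun h => irrefl' i (h ▸ hij)
      have := pp_add_pp_swap hP hne
      simp only [Majority] at hij hjk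
      linarith
    exact (hT.1 i j k hij.le hjk.le).lt_of_ne' (ne_half hik)

def IsMajorityRanking (P : Equiv.Perm (Fin n) → ℝ) (σ : Equiv.Perm (Fin n)) : Prop :=
  ∀ p ∈ pairs n, σ p.1 < σ p.2 ↔ Majority P p.1 p.2

lemma exists_isMajorityRanking {P : Equiv.Perm (Fin n) → ℝ} (hP : IsProb P)
    (hT : StrictStochTrans P) : ∃ σ, IsMajorityRanking P σ := by
  have := isStrictTotalOrder_majority hP hT
  obtain ⟨σ, hσ⟩ := exists_perm_lt_iff_of_isStrictTotalOrder (Majority P)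
  exact ⟨σ, fun p _ => hσ p.1 p.2⟩

def discordantPairs (σ σ' : Equiv.Perm (Fin n)) : Finset (Fin n × Fin n) :=
  (pairs n).filter fun p => ¬ (σ p.1 < σ p.2 ↔ σ' p.1 < σ' p.2)

lemma discordantPairs_subset (σ σ' : Equiv.Perm (Fin n)) : discordantPairs σ σ' ⊆ pairs n :=
  Finset.filter_subset _ _

lemma pairCost_sub_pairCost {P : Equiv.Perm (Fin n) → ℝ} (hP : IsProb P)
    (σ : Equiv.Perm (Fin n)) {σ' : Equiv.Perm (Fin n)} (hσ' : IsMajorityRanking P σ')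
    {p : Fin n × Fin n} (hp : p ∈ pairs n) :
    pairCost P σ p - pairCost P σ' p =
      if σ p.1 < σ p.2 ↔ σ' p.1 < σ' p.2 then 0 else 2 * |pp P p.1 p.2 - 1/2| := by
  have hsum := pp_add_pp_swap hP (ne_of_mem_pairs hp)
  have hmaj := hσ' p hp
  unfold pairCost Majority at *
  by_cases h : σ p.1 < σ p.2 <;> by_cases h' : σ' p.1 < σ' p.2 <;>
    simp only [h, h', if_true, if_false, iff_true, iff_false, true_iff, false_iff, sub_self,
      not_true, not_lt] at hmaj ⊢ <;>
    rcases abs_cases (pp P p.1 p.2 - 1/2) with ⟨habs, _⟩ | ⟨habs, _⟩ <;>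
    linarith

lemma L_sub_L_eq_sum {P : Equiv.Perm (Fin n) → ℝ} (hP : IsProb P)
    (σ : Equiv.Perm (Fin n)) {σ' : Equiv.Perm (Fin n)} (hσ' : IsMajorityRanking P σ') :
    L P σ - L P σ' = ∑ p ∈ discordantPairs σ σ', 2 * |pp P p.1 p.2 - 1/2| := by
  rw [L_eq_sum_pairCost, L_eq_sum_pairCost, ← Finset.sum_sub_distrib, discordantPairs,
    Finset.sum_filter]
  exact Finset.sum_congr rfl fun p hp => by
    rw [pairCost_sub_pairCost hP σ hσ' hp, ite_not]

lemma IsMedian.isMajorityRanking {P : Equiv.Perm (Fin n) → ℝ} (hP : IsProb P)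
    (hT : StrictStochTrans P) {σ : Equiv.Perm (Fin n)} (hσ : IsMedian P σ) :
    IsMajorityRanking P σ := by
  obtain ⟨σ₀, hσ₀⟩ := exists_isMajorityRanking hP hT
  have hempty : discordantPairs σ σ₀ = ∅ := by
    by_contra hne
    have hpos : 0 < ∑ p ∈ discordantPairs σ σ₀, 2 * |pp P p.1 p.2 - 1/2| :=
      Finset.sum_pos (fun p hp => by
        have := hT.2 p.1 p.2 (mem_pairs.mp (discordantPairs_subset σ σ₀ hp))
        positivity) (Finset.nonempty_iff_ne_empty.mpr hne)
    linarith [L_sub_L_eq_sum hP σ hσ₀, hσ σ₀]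
  intro p hp
  have hagree : σ p.1 < σ p.2 ↔ σ₀ p.1 < σ₀ p.2 := by
    by_contra h
    have hmem : p ∈ discordantPairs σ σ₀ := Finset.mem_filter.mpr ⟨hp, h⟩
    simp [hempty] at hmem
  exact hagree.trans (hσ₀ p hp)

lemma mul_card_discordantPairs_le_L_sub_L {P : Equiv.Perm (Fin n) → ℝ} (hP : IsProb P)
    (hT : StrictStochTrans P) {σstar : Equiv.Perm (Fin n)} (hσstar : IsMedian P σstar)
    {H : ℝ} (hH : ∀ i j : Fin n, i < j → H ≤ |pp P i j - 1/2|) (σ : Equiv.Perm (Fin n)) :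
    2 * H * #(discordantPairs σ σstar) ≤ L P σ - L P σstar := by
  rw [L_sub_L_eq_sum hP σ (hσstar.isMajorityRanking hP hT), Finset.card_eq_sum_ones,
    Nat.cast_sum, Finset.mul_sum]
  refine Finset.sum_le_sum fun p hp => ?_
  have := hH p.1 p.2 (mem_pairs.mp (discordantPairs_subset σ σstar hp))
  simp only [Nat.cast_one, mul_one]
  linarith

lemma abs_Zfun_le {X : Type*} (s sstar : X → Equiv.Perm (Fin n)) (x : X)
    (τ : Equiv.Perm (Fin n)) : |Zfun s sstar x τ| ≤ #(discordantPairs (s x) (sstar x)) := by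
  have hvanish : ∀ p ∈ pairs n, discord τ (s x) p - discord τ (sstar x) p ≠ 0 →
      ¬ (s x p.1 < s x p.2 ↔ sstar x p.1 < sstar x p.2) := fun p hp hne h =>
    hne (sub_eq_zero.mpr (discord_congr τ (ne_of_mem_pairs hp) h))
  rw [Zfun_eq_sum_discord, discordantPairs, ← Finset.sum_filter_of_ne hvanish,
    Finset.card_eq_sum_ones, Nat.cast_sum]
  exact (Finset.abs_sum_le_sum_abs _ _).trans (Finset.sum_le_sum fun p _ => by
    simpa using abs_discord_sub_discord_le_one τ (s x) (sstar x) p)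

lemma sum_mul_Zfun_sq_le {X : Type*} {P : Equiv.Perm (Fin n) → ℝ} (hP : IsProb P)
    (hT : StrictStochTrans P) (s sstar : X → Equiv.Perm (Fin n)) (x : X)
    (hσstar : IsMedian P (sstar x)) {H : ℝ} (hHpos : 0 < H)
    (hH : ∀ i j : Fin n, i < j → H ≤ |pp P i j - 1/2|) :
    ∑ τ, P τ * Zfun s sstar x τ ^ 2 ≤
      (n : ℝ) * (n - 1) / (2 * H) * (L P (s x) - L P (sstar x)) := by
  set N : ℝ := (n : ℝ) * (n - 1)
  set m : ℝ := ((#(discordantPairs (s x) (sstar x)) : ℕ) : ℝ)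
  have hm0 : 0 ≤ m := Nat.cast_nonneg _
  have hmN : m ≤ N :=
    (Nat.cast_le.mpr (Finset.card_le_card (discordantPairs_subset _ _))).trans card_pairs_le
  have hZsq : ∀ τ, Zfun s sstar x τ ^ 2 ≤ N * m := fun τ => calc
    Zfun s sstar x τ ^ 2 = |Zfun s sstar x τ| ^ 2 := (sq_abs _).symm
    _ ≤ m ^ 2 := pow_le_pow_left₀ (abs_nonneg _) (abs_Zfun_le s sstar x τ) 2
    _ ≤ N * m := by rw [sq]; exact mul_le_mul_of_nonneg_right hmN hm0
  calc ∑ τ, P τ * Zfun s sstar x τ ^ 2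
      ≤ ∑ τ, P τ * (N * m) :=
        Finset.sum_le_sum fun τ _ => mul_le_mul_of_nonneg_left (hZsq τ) (hP.1 τ)
    _ = N / (2 * H) * (2 * H * m) := by rw [← Finset.sum_mul, hP.2]; field_simp
    _ ≤ N / (2 * H) * (L P (s x) - L P (sstar x)) := by
        have hN0 : 0 ≤ N := hm0.trans hmN
        gcongr
        exact mul_card_discordantPairs_le_L_sub_L hP hT hσstar hH (s x)

lemma measurable_L_comp {X : Type*} [MeasurableSpace X] {P : X → Equiv.Perm (Fin n) → ℝ}
    (hmeas : ∀ τ, Measurable fun x => P x τ) {s : X → Equiv.Perm (Fin n)} (hs : Measurable s) :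
    Measurable fun x => L (P x) (s x) :=
  Finset.measurable_sum _ fun τ _ => (hmeas τ).mul ((measurable_from_top (f := dtau τ)).comp hs)

lemma L_mem_Icc {P : Equiv.Perm (Fin n) → ℝ} (hP : IsProb P) (σ : Equiv.Perm (Fin n)) :
    L P σ ∈ Set.Icc 0 (#(pairs n) : ℝ) := by
  have hdtau (τ : Equiv.Perm (Fin n)) : dtau τ σ ∈ Set.Icc 0 (#(pairs n) : ℝ) := by
    rw [dtau_eq_sum_discord, Finset.card_eq_sum_ones, Nat.cast_sum]
    exact ⟨Finset.sum_nonneg fun p _ => by unfold discord; split_ifs <;> norm_num,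
      Finset.sum_le_sum fun p _ => by unfold discord; split_ifs <;> norm_num⟩
  refine ⟨Finset.sum_nonneg fun τ _ => mul_nonneg (hP.1 τ) (hdtau τ).1, ?_⟩
  calc L P σ ≤ ∑ τ, P τ * (#(pairs n) : ℝ) :=
        Finset.sum_le_sum fun τ _ => mul_le_mul_of_nonneg_left (hdtau τ).2 (hP.1 τ)
    _ = #(pairs n) := by rw [← Finset.sum_mul, hP.2, one_mul]

lemma integrable_L_comp {X : Type*} [MeasurableSpace X] {μ : Measure X} [IsFiniteMeasure μ]
    {P : X → Equiv.Perm (Fin n) → ℝ} (hP : ∀ x, IsProb (P x))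
    (hmeas : ∀ τ, Measurable fun x => P x τ) {s : X → Equiv.Perm (Fin n)} (hs : Measurable s) :
    Integrable (fun x => L (P x) (s x)) μ :=
  .of_bound (measurable_L_comp hmeas hs).aestronglyMeasurable #(pairs n) <|
    ae_of_all _ fun x => by
      have h := L_mem_Icc (hP x) (s x)
      rw [Real.norm_eq_abs, abs_of_nonneg h.1]
      exact h.2

end

theorem stmt_15 {n : ℕ} {X : Type*} [MeasurableSpace X]
    (μ : Measure X) [IsProbabilityMeasure μ]
    (P : X → Equiv.Perm (Fin n) → ℝ)
    (hP : ∀ x, IsProb (P x)) (hmeas : ∀ τ, Measurable fun x => P x τ)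
    (H : ℝ) (hHpos : 0 < H)
    (hH : ∀ x, ∀ i j : Fin n, i < j → H ≤ |pp (P x) i j - 1/2|)
    (hTx : ∀ x, StrictStochTrans (P x))
    (sstar : X → Equiv.Perm (Fin n)) (hsstarm : Measurable sstar)
    (hmed : ∀ x, IsMedian (P x) (sstar x))
    (s : X → Equiv.Perm (Fin n)) (hs : Measurable s) :
    jointE μ P (fun x τ => (Zfun s sstar x τ)^2) - (jointE μ P (Zfun s sstar))^2 ≤
      ((n : ℝ) * (n - 1) / (2 * H)) * (Risk μ P s - Risk μ P sstar) := by
  have hLs := integrable_L_comp (μ := μ) hP hmeas hs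
  have hLsstar := integrable_L_comp (μ := μ) hP hmeas hsstarm
  calc jointE μ P (fun x τ => (Zfun s sstar x τ)^2) - (jointE μ P (Zfun s sstar))^2
      ≤ jointE μ P (fun x τ => (Zfun s sstar x τ)^2) := sub_le_self _ (sq_nonneg _)
    _ ≤ ∫ x, (n : ℝ) * (n - 1) / (2 * H) * (L (P x) (s x) - L (P x) (sstar x)) ∂μ :=
        integral_mono_of_nonneg
          (ae_of_all _ fun x =>
            Finset.sum_nonneg fun τ _ => mul_nonneg ((hP x).1 τ) (sq_nonneg _))
          ((hLs.sub hLsstar).const_mul _)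
          (ae_of_all _ fun x =>
            sum_mul_Zfun_sq_le (hP x) (hTx x) s sstar x (hmed x) hHpos (hH x))
    _ = _ := by rw [integral_const_mul, integral_sub hLs hLsstar]; rfl
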